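/- arXiv:2506.07377 — 4 statements merged into one kernel-verified Lean document; each statement's English description precedes it below -/
import Mathlib

section
/- Let T be a proper infinite rooted tree with weight σ and let p ∈ (1,∞). Then the sequence n ↦ Mod_{p,σ}(Γ_n) is non-increasing, and lim_{n→∞} Mod_{p,σ}(Γ_n) = Mod_{p,σ}(Γ_∞). -/
open scoped ENNReal NNReal

/-- A proper infinite rooted tree, modeled as a prefix-closed set of finite lists of
naturals in which every node has at least one and finitely many children. -/
structure PTree where
  mem : List ℕ → Prop
  root_mem : mem []
  prefix_closed : ∀ ⦃l₁ l₂ : List ℕ⦄, l₁ <+: l₂ → mem l₂ → mem l₁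
  child_exists : ∀ ⦃l⦄, mem l → ∃ a, mem (l ++ [a])
  finite_children : ∀ ⦃l⦄, mem l → {a : ℕ | mem (l ++ [a])}.Finite

/-- The initial segment of length `n` of `f : ℕ → ℕ`, as a list. -/
def seg (f : ℕ → ℕ) (n : ℕ) : List ℕ := (List.range n).map f

namespace PTree

variable (T : PTree)

/-- The edges of the tree: the nonempty lists in `T`. -/
def Edge : Type := {e : List ℕ // T.mem e ∧ e ≠ []}

/-- The family `Γ_∞` of infinite descending paths: functions all of whose
finite initial segments lie in `T`. -/
def GammaInf : Set (ℕ → ℕ) := {f | ∀ n, T.mem (seg f n)}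

/-- `ρ`-length of the infinite descending path determined by `f`: the sum of `ρ`
over the nonempty initial segments of `f`. -/
noncomputable def lenInf (ρ : List ℕ → ℝ≥0) (f : ℕ → ℕ) : ℝ≥0∞ :=
  ∑' n : ℕ, (ρ (seg f (n + 1)) : ℝ≥0∞)

/-- `ρ`-length of the finite descending path `γ_e` consisting of the nonempty
prefixes of the edge `e`. -/
noncomputable def lenFin (ρ : List ℕ → ℝ≥0) (e : List ℕ) : ℝ≥0∞ :=
  ∑ k ∈ Finset.range e.length, (ρ (e.take (k + 1)) : ℝ≥0∞)

/-- Admissible densities for the family `Γ_n` (identified with the shell `S_n`). -/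
def AdmFin (n : ℕ) : Set (List ℕ → ℝ≥0) :=
  {ρ | ∀ e : List ℕ, T.mem e → e.length = n → 1 ≤ lenFin ρ e}

/-- Admissible densities for the family `Γ_∞`. -/
def AdmInf : Set (List ℕ → ℝ≥0) :=
  {ρ | ∀ f ∈ T.GammaInf, 1 ≤ lenInf ρ f}

/-- The `p`-energy of a density `ρ` with respect to the weight `σ`. -/
noncomputable def energy (p : ℝ) (σ ρ : List ℕ → ℝ≥0) : ℝ≥0∞ :=
  ∑' e : T.Edge, (σ e.1 : ℝ≥0∞) * (ρ e.1 : ℝ≥0∞) ^ p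

/-- The `∞`-energy of a density `ρ` with respect to the weight `σ`. -/
noncomputable def energyTop (σ ρ : List ℕ → ℝ≥0) : ℝ≥0∞ :=
  ⨆ e : T.Edge, (σ e.1 : ℝ≥0∞) * (ρ e.1 : ℝ≥0∞)

/-- The `p`-modulus of the family `Γ_n`. -/
noncomputable def ModFin (p : ℝ) (σ : List ℕ → ℝ≥0) (n : ℕ) : ℝ≥0∞ :=
  ⨅ ρ ∈ T.AdmFin n, T.energy p σ ρ

/-- The `p`-modulus of the family `Γ_∞`. -/
noncomputable def ModInf (p : ℝ) (σ : List ℕ → ℝ≥0) : ℝ≥0∞ :=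
  ⨅ ρ ∈ T.AdmInf, T.energy p σ ρ

/-- The `∞`-modulus of the family `Γ_∞`. -/
noncomputable def ModTop (σ : List ℕ → ℝ≥0) : ℝ≥0∞ :=
  ⨅ ρ ∈ T.AdmInf, T.energyTop σ ρ

lemma lenFin_mono (ρ : List ℕ → ℝ≥0) {l₁ l₂ : List ℕ} (h : l₁ <+: l₂) :
    lenFin ρ l₁ ≤ lenFin ρ l₂ := by
  obtain ⟨t, rfl⟩ := h
  unfold lenFin
  calc ∑ k ∈ Finset.range l₁.length, (ρ (l₁.take (k + 1)) : ℝ≥0∞)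
      = ∑ k ∈ Finset.range l₁.length, (ρ ((l₁ ++ t).take (k + 1)) : ℝ≥0∞) := by
        refine Finset.sum_congr rfl fun k hk => ?_
        rw [List.take_append_of_le_length (by simpa using Finset.mem_range.mp hk)]
    _ ≤ ∑ k ∈ Finset.range (l₁ ++ t).length, (ρ ((l₁ ++ t).take (k + 1)) : ℝ≥0∞) := by
        refine Finset.sum_le_sum_of_subset ?_
        exact Finset.range_subset_range.mpr (by simp)

lemma seg_length (f : ℕ → ℕ) (n : ℕ) : (seg f n).length = n := by simp [seg]

lemma seg_succ (f : ℕ → ℕ) (n : ℕ) : seg f (n + 1) = seg f n ++ [f n] := by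
  simp [seg, List.range_succ]

lemma take_seg (f : ℕ → ℕ) {k n : ℕ} (h : k ≤ n) : (seg f n).take k = seg f k := by
  simp [seg, ← List.map_take, List.take_range, Nat.min_eq_left h]

lemma lenFin_seg (ρ : List ℕ → ℝ≥0) (f : ℕ → ℕ) (n : ℕ) :
    lenFin ρ (seg f n) = ∑ k ∈ Finset.range n, (ρ (seg f (k + 1)) : ℝ≥0∞) := by
  unfold lenFin
  rw [seg_length]
  refine Finset.sum_congr rfl fun k hk => ?_
  rw [take_seg f (Finset.mem_range.mp hk)]

lemma admFin_subset (T : PTree) {m n : ℕ} (h : m ≤ n) : T.AdmFin m ⊆ T.AdmFin n := by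
  intro ρ hρ e he hlen
  have hpre : e.take m <+: e := List.take_prefix _ _
  have h1 := hρ (e.take m) (T.prefix_closed hpre he)
    (by rw [List.length_take, hlen, Nat.min_eq_left h])
  exact h1.trans (lenFin_mono ρ hpre)

lemma admFin_subset_inf (T : PTree) (n : ℕ) : T.AdmFin n ⊆ T.AdmInf := by
  intro ρ hρ f hf
  have h1 := hρ (seg f n) (hf n) (seg_length f n)
  refine h1.trans ?_
  rw [lenFin_seg]
  exact ENNReal.sum_le_tsum _

lemma exists_shell_bound (T : PTree) (ρ : List ℕ → ℝ≥0) {δ : ℝ≥0} (hδ : δ < 1)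
    (hρ : ρ ∈ T.AdmInf) :
    ∃ n, ∀ e : List ℕ, T.mem e → e.length = n → (δ : ℝ≥0∞) ≤ lenFin ρ e := by
  by_contra hcon
  push_neg at hcon
  have hext : ∀ {l e : List ℕ}, l <+: e → l.length < e.length → ∃ a, l ++ [a] <+: e := by
    intro l e h hlen
    obtain ⟨t, rfl⟩ := h
    cases t with
    | nil => simp at hlen
    | cons a t' => exact ⟨a, t', by simp⟩
  set Q : List ℕ → Prop := fun l =>
    T.mem l ∧ ∀ n, ∃ e, T.mem e ∧ l <+: e ∧ n ≤ e.length ∧ lenFin ρ e < (δ : ℝ≥0∞) with hQdef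
  have hQroot : Q [] := by
    refine ⟨T.root_mem, fun n => ?_⟩
    obtain ⟨e, he, hlen, hlt⟩ := hcon n
    exact ⟨e, he, List.nil_prefix, hlen.ge, hlt⟩
  have step : ∀ l : List ℕ, Q l → ∃ a, Q (l ++ [a]) := by
    intro l hl
    have hg : ∀ n, ∃ a, T.mem (l ++ [a]) ∧
        ∃ e, T.mem e ∧ l ++ [a] <+: e ∧ n ≤ e.length ∧ lenFin ρ e < (δ : ℝ≥0∞) := by
      intro n
      obtain ⟨e, he, hpre, hlen, hlt⟩ := hl.2 (l.length + 1 + n)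
      obtain ⟨a, ha⟩ := hext hpre (by omega)
      exact ⟨a, T.prefix_closed ha he, e, he, ha, by omega, hlt⟩
    choose g hmem hwit using hg
    have : Finite {a : ℕ | T.mem (l ++ [a])} := (T.finite_children hl.1).to_subtype
    obtain ⟨a₀, ha₀⟩ := Finite.exists_infinite_fiber
      (fun n => (⟨g n, hmem n⟩ : {a : ℕ | T.mem (l ++ [a])}))
    have hinf : {m : ℕ | g m = (a₀ : ℕ)}.Infinite := by
      have h1 : ((fun n => (⟨g n, hmem n⟩ : {a : ℕ | T.mem (l ++ [a])})) ⁻¹' {a₀}).Infinite :=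
        Set.infinite_coe_iff.mp ha₀
      refine Set.Infinite.mono (fun m hm => ?_) h1
      simpa [Subtype.ext_iff] using hm
    refine ⟨(a₀ : ℕ), a₀.2, fun n => ?_⟩
    obtain ⟨m, hm, hnm⟩ := hinf.exists_gt n
    obtain ⟨e, he, hpre, hlen, hlt⟩ := hwit m
    rw [hm] at hpre
    exact ⟨e, he, hpre, by omega, hlt⟩
  let F : {l : List ℕ // Q l} → {l : List ℕ // Q l} := fun x =>
    ⟨x.1 ++ [Classical.choose (step x.1 x.2)], Classical.choose_spec (step x.1 x.2)⟩
  let G : ℕ → {l : List ℕ // Q l} := fun n => F^[n] ⟨[], hQroot⟩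
  have hGsucc : ∀ n, G (n + 1) = F (G n) := fun n => Function.iterate_succ_apply' F n _
  have hGlen : ∀ n, (G n).1.length = n := by
    intro n
    induction n with
    | zero => rfl
    | succ n ih => rw [hGsucc]; simp [F, ih]
  let f : ℕ → ℕ := fun n => (G (n + 1)).1.getLastD 0
  have hseg : ∀ n, seg f n = (G n).1 := by
    intro n
    induction n with
    | zero => rfl
    | succ n ih =>
      rw [seg_succ, ih, hGsucc]
      show (G n).1 ++ [f n] = (G n).1 ++ [Classical.choose (step (G n).1 (G n).2)]
      congr 1
      show [(G (n + 1)).1.getLastD 0] = _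
      rw [hGsucc]
      show [((G n).1 ++ [Classical.choose (step (G n).1 (G n).2)]).getLastD 0] = _
      rw [List.getLastD_concat]
  have hfG : f ∈ T.GammaInf := fun n => by rw [hseg n]; exact (G n).2.1
  have hlenle : lenInf ρ f ≤ (δ : ℝ≥0∞) := by
    rw [lenInf, ENNReal.tsum_eq_iSup_nat]
    refine iSup_le fun n => ?_
    rw [← lenFin_seg, hseg]
    obtain ⟨e, he, hpre, _, hlt⟩ := (G n).2.2 0
    exact (lenFin_mono ρ hpre).trans hlt.le
  have h1 : (1 : ℝ≥0∞) ≤ (δ : ℝ≥0∞) := le_trans (hρ f hfG) hlenle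
  exact absurd h1 (not_le.mpr (by exact_mod_cast hδ))

lemma iInf_modFin_le (T : PTree) (σ : List ℕ → ℝ≥0) {p : ℝ} (hp : 1 < p) :
    (⨅ n, T.ModFin p σ n) ≤ T.ModInf p σ := by
  have hp0 : (0 : ℝ) < p := lt_trans one_pos hp
  rw [ModInf]
  refine le_iInf fun ρ => le_iInf fun hρ => ?_
  refine ENNReal.le_of_forall_lt_one_mul_le fun a ha => ?_
  rcases eq_or_ne a 0 with rfl | ha0
  · simp
  lift a to ℝ≥0 using ha.ne_top
  have hb1 : a < 1 := by exact_mod_cast ha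
  have hb0 : 0 < a := pos_iff_ne_zero.mpr (by exact_mod_cast ha0)
  set δ : ℝ≥0 := a ^ (1 / p) with hδdef
  have hδ1 : δ < 1 := NNReal.rpow_lt_one hb1 (by positivity)
  have hδ0 : 0 < δ := NNReal.rpow_pos hb0
  obtain ⟨n, hn⟩ := T.exists_shell_bound ρ hδ1 hρ
  set ρ' : List ℕ → ℝ≥0 := fun e => δ⁻¹ * ρ e with hρ'def
  have hscale : ∀ e : List ℕ, lenFin ρ' e = ((δ⁻¹ : ℝ≥0) : ℝ≥0∞) * lenFin ρ e := by
    intro e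
    simp [lenFin, hρ'def, Finset.mul_sum, ENNReal.coe_mul]
  have hadm : ρ' ∈ T.AdmFin n := by
    intro e he hlen
    rw [hscale]
    calc (1 : ℝ≥0∞) = ((δ⁻¹ * δ : ℝ≥0) : ℝ≥0∞) := by
          rw [inv_mul_cancel₀ hδ0.ne']; simp
      _ = ((δ⁻¹ : ℝ≥0) : ℝ≥0∞) * (δ : ℝ≥0∞) := by rw [ENNReal.coe_mul]
      _ ≤ _ := mul_le_mul_right (hn e he hlen) _
  have hE : T.energy p σ ρ' = ((δ⁻¹ : ℝ≥0) : ℝ≥0∞) ^ p * T.energy p σ ρ := by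
    rw [energy, energy, ← ENNReal.tsum_mul_left]
    refine tsum_congr fun e => ?_
    rw [hρ'def]
    rw [ENNReal.coe_mul, ENNReal.mul_rpow_of_nonneg _ _ hp0.le]
    ring
  have hle : (⨅ m, T.ModFin p σ m) ≤ ((δ⁻¹ : ℝ≥0) : ℝ≥0∞) ^ p * T.energy p σ ρ := by
    refine (iInf_le _ n).trans ?_
    rw [← hE, ModFin]
    exact iInf₂_le ρ' hadm
  have hpow : ((δ⁻¹ : ℝ≥0) : ℝ≥0∞) ^ p = ((a⁻¹ : ℝ≥0) : ℝ≥0∞) := by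
    rw [← ENNReal.coe_rpow_of_ne_zero (inv_ne_zero hδ0.ne') p]
    congr 1
    rw [NNReal.inv_rpow, hδdef, ← NNReal.rpow_mul, one_div_mul_cancel hp0.ne',
      NNReal.rpow_one]
  rw [hpow] at hle
  calc (a : ℝ≥0∞) * (⨅ m, T.ModFin p σ m)
      ≤ (a : ℝ≥0∞) * (((a⁻¹ : ℝ≥0) : ℝ≥0∞) * T.energy p σ ρ) := mul_le_mul_right hle _
    _ = ((a * a⁻¹ : ℝ≥0) : ℝ≥0∞) * T.energy p σ ρ := by rw [ENNReal.coe_mul, mul_assoc]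
    _ = T.energy p σ ρ := by rw [mul_inv_cancel₀ hb0.ne']; simp

end PTree

/-- for `p ∈ (1,∞)`, `n ↦ Mod_{p,σ}(Γ_n)` is non-increasing and
converges to `Mod_{p,σ}(Γ_∞)`. -/
theorem stmt0 (T : PTree) (σ : List ℕ → ℝ≥0) (hσ : ∀ e : List ℕ, 0 < σ e)
    (p : ℝ) (hp : 1 < p) :
    (∀ m n : ℕ, 1 ≤ m → m ≤ n → T.ModFin p σ n ≤ T.ModFin p σ m) ∧
    Filter.Tendsto (fun n : ℕ => T.ModFin p σ n) Filter.atTop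
      (nhds (T.ModInf p σ)) := by
  have hanti : Antitone (fun n => T.ModFin p σ n) := fun m n h =>
    iInf_le_iInf_of_subset (T.admFin_subset h)
  refine ⟨fun m n _ h => hanti h, ?_⟩
  have h1 : (⨅ n, T.ModFin p σ n) = T.ModInf p σ :=
    le_antisymm (T.iInf_modFin_le σ hp)
      (le_iInf fun n => iInf_le_iInf_of_subset (T.admFin_subset_inf n))
  have h2 := tendsto_atTop_iInf hanti
  rwa [h1] at h2
end

section
/- Let p ∈ (1,∞) with Hölder conjugate q, let s : {1,2,...} → ℕ satisfy s_k ≥ 1, and let σ : {1,2,...} → ℝ satisfy σ_k > 0. If Σ_{k≥1} (σ_k s_k)^{-q/p} converges, then M_p(σ,s) = (Σ_{k≥1} (σ_k s_k)^{-q/p})^{-p/q}; if Σ_{k≥1} (σ_k s_k)^{-q/p} diverges, then M_p(σ,s) = 0. -/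
open scoped ENNReal NNReal

/-!
With `A_k = σ_k s_k` and `w_k = A_k^(-q/p)`, Hölder's inequality applied to
`ρ_k = (A_k^(1/p) ρ_k) · A_k^(-1/p)` gives `1 ≤ Σ ρ_k ≤ E(ρ)^(1/p) (Σ w_k)^(1/q)`
for every admissible density, where `E(ρ) = Σ A_k ρ_k^p`; that is,
`E(ρ) ≥ (Σ w_k)^(-p/q)`. Conversely the equality case `ρ_k = w_k / Σ_{j ∈ F} w_j`,
truncated to finite sets `F`, has energy `(Σ_{j ∈ F} w_j)^(-p/q)`, which tends to
`(Σ w_k)^(-p/q)`; when the series diverges this limit is `0`.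
-/

open Filter

/-- The radially symmetric `p`-modulus `M_p(σ, s)` of the family of infinite
descending paths in a radially symmetric infinite tree whose `k`-th shell has
`s k` edges, each of weight `σ k`: the infimum of the `p`-energies
`Σ_k s_k σ_k ρ_k^p` over all densities `ρ` with `Σ_k ρ_k ≥ 1`. -/
noncomputable def Mmod (p : ℝ) (σ : ℕ → ℝ≥0) (s : ℕ → ℕ) : ℝ≥0∞ :=
  ⨅ ρ ∈ {ρ : ℕ → ℝ≥0 | 1 ≤ ∑' k : ℕ, (ρ k : ℝ≥0∞)},
    ∑' k : ℕ, (s k : ℝ≥0∞) * (σ k : ℝ≥0∞) * (ρ k : ℝ≥0∞) ^ p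

theorem ENNReal.inner_le_Lp_mul_Lq_tsum {ι : Type*} (f g : ι → ℝ≥0∞) {p q : ℝ}
    (hpq : p.HolderConjugate q) :
    ∑' i, f i * g i ≤ (∑' i, f i ^ p) ^ (1 / p) * (∑' i, g i ^ q) ^ (1 / q) := by
  rw [ENNReal.tsum_eq_iSup_sum]
  refine iSup_le fun F => (ENNReal.inner_le_Lp_mul_Lq F f g hpq).trans ?_
  gcongr
  · exact one_div_nonneg.2 hpq.nonneg
  · exact ENNReal.sum_le_tsum F
  · exact one_div_nonneg.2 hpq.symm.nonneg
  · exact ENNReal.sum_le_tsum F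

namespace Real.HolderConjugate

variable {p q : ℝ}

theorem neg_div_conj_eq_one_sub (hpq : p.HolderConjugate q) : -(p / q) = 1 - p := by
  rw [hpq.div_conj_eq_sub_one]; ring

theorem ennreal_mul_rpow_neg_div_conj {a : ℝ≥0∞} (hpq : p.HolderConjugate q) (ha₀ : a ≠ 0)
    (ha : a ≠ ⊤) : a * (a ^ (-(q / p))) ^ p = a ^ (-(q / p)) := by
  have hexp : 1 + -(q / p) * p = -(q / p) := by
    rw [neg_mul, div_mul_cancel₀ _ hpq.ne_zero, hpq.symm.div_conj_eq_sub_one]; ring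
  calc a * (a ^ (-(q / p))) ^ p = a ^ (1 + -(q / p) * p) := by
        rw [ENNReal.rpow_add _ _ ha₀ ha, ENNReal.rpow_one, ENNReal.rpow_mul]
    _ = a ^ (-(q / p)) := by rw [hexp]

end Real.HolderConjugate

section WeightedEnergy

variable {ι : Type*} {p q : ℝ} {A : ι → ℝ≥0∞}

theorem tsum_le_energy_mul_tsum_rpow (hpq : p.HolderConjugate q) (hA₀ : ∀ i, A i ≠ 0)
    (hA : ∀ i, A i ≠ ⊤) (ρ : ι → ℝ≥0∞) :
    ∑' i, ρ i ≤
      (∑' i, A i * ρ i ^ p) ^ (1 / p) * (∑' i, A i ^ (-(q / p))) ^ (1 / q) := by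
  have key := ENNReal.inner_le_Lp_mul_Lq_tsum (fun i => A i ^ (1 / p) * ρ i)
    (fun i => A i ^ (-(1 / p))) hpq
  have h_fg (i : ι) : A i ^ (1 / p) * ρ i * A i ^ (-(1 / p)) = ρ i := by
    rw [mul_right_comm, ← ENNReal.rpow_add _ _ (hA₀ i) (hA i), add_neg_cancel,
      ENNReal.rpow_zero, one_mul]
  have h_f (i : ι) : (A i ^ (1 / p) * ρ i) ^ p = A i * ρ i ^ p := by
    rw [ENNReal.mul_rpow_of_nonneg _ _ hpq.nonneg, ← ENNReal.rpow_mul,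
      one_div_mul_cancel hpq.ne_zero, ENNReal.rpow_one]
  have h_g (i : ι) : (A i ^ (-(1 / p))) ^ q = A i ^ (-(q / p)) := by
    rw [← ENNReal.rpow_mul]
    ring_nf
  simpa only [h_fg, h_f, h_g] using key

theorem tsum_rpow_neg_le_energy (hpq : p.HolderConjugate q) (hA₀ : ∀ i, A i ≠ 0)
    (hA : ∀ i, A i ≠ ⊤) {ρ : ι → ℝ≥0∞} (hρ : 1 ≤ ∑' i, ρ i) :
    (∑' i, A i ^ (-(q / p))) ^ (-(p / q)) ≤ ∑' i, A i * ρ i ^ p := by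
  set S := ∑' i, A i ^ (-(q / p))
  set E := ∑' i, A i * ρ i ^ p
  have hHolder : 1 ≤ E ^ (1 / p) * S ^ (1 / q) :=
    hρ.trans (tsum_le_energy_mul_tsum_rpow hpq hA₀ hA ρ)
  have hHolder_pow : 1 ≤ E * S ^ (p / q) := by
    simpa [ENNReal.mul_rpow_of_nonneg _ _ hpq.nonneg, ← ENNReal.rpow_mul, hpq.ne_zero,
      div_eq_mul_inv, mul_comm] using ENNReal.rpow_le_rpow hHolder hpq.nonneg
  have hE : E ≠ 0 := by rintro h; simp [h] at hHolder_pow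
  have hS : S ^ (p / q) ≠ 0 := by rintro h; simp [h] at hHolder_pow
  rw [ENNReal.rpow_neg, ENNReal.inv_le_iff_le_mul (fun _ => hS) (fun _ => hE), mul_comm]
  exact hHolder_pow

theorem exists_density_energy_eq (hpq : p.HolderConjugate q) (hA₀ : ∀ i, A i ≠ 0)
    (hA : ∀ i, A i ≠ ⊤) {F : Finset ι} (hF : F.Nonempty) :
    ∃ ρ : ι → ℝ≥0∞, (∀ i, ρ i ≠ ⊤) ∧ 1 ≤ ∑' i, ρ i ∧
      ∑' i, A i * ρ i ^ p = (∑ i ∈ F, A i ^ (-(q / p))) ^ (-(p / q)) := by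
  classical
  set w := fun i => A i ^ (-(q / p))
  set T := ∑ i ∈ F, w i
  have hneg : -(q / p) < 0 := neg_neg_of_pos (div_pos hpq.symm.pos hpq.pos)
  have hw₀ (i : ι) : w i ≠ 0 := by simp [w, ENNReal.rpow_eq_zero_iff, hA i, hneg.not_gt]
  have hw (i : ι) : w i ≠ ⊤ := by simp [w, ENNReal.rpow_eq_top_iff, hA₀ i, hneg.not_gt]
  have hT₀ : T ≠ 0 := by
    obtain ⟨i, hi⟩ := hF
    exact fun h => hw₀ i (Finset.sum_eq_zero_iff.1 h i hi)
  have hT : T ≠ ⊤ := ENNReal.sum_ne_top.2 fun i _ => hw i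
  refine ⟨fun i => if i ∈ F then w i / T else 0, fun i => ?_, ?_, ?_⟩
  · dsimp only
    split_ifs
    exacts [ENNReal.div_ne_top (hw i) hT₀, ENNReal.zero_ne_top]
  · rw [tsum_eq_sum (s := F) fun i hi => if_neg hi, Finset.sum_congr rfl fun i hi => if_pos hi]
    simp_rw [div_eq_mul_inv, ← Finset.sum_mul]
    exact (ENNReal.mul_inv_cancel hT₀ hT).ge
  · have h_term (i : ι) (hi : i ∈ F) :
        A i * (if i ∈ F then w i / T else 0) ^ p = w i * (T ^ p)⁻¹ := by
      rw [if_pos hi, ENNReal.div_rpow_of_nonneg _ _ hpq.nonneg, div_eq_mul_inv, ← mul_assoc,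
        hpq.ennreal_mul_rpow_neg_div_conj (hA₀ i) (hA i)]
    rw [tsum_eq_sum (s := F) fun i hi => by simp [hi, ENNReal.zero_rpow_of_pos hpq.pos],
      Finset.sum_congr rfl h_term, ← Finset.sum_mul, hpq.neg_div_conj_eq_one_sub,
      ENNReal.rpow_sub _ _ hT₀ hT, ENNReal.rpow_one, div_eq_mul_inv]

end WeightedEnergy

section Mmod

variable {p q : ℝ} {σ : ℕ → ℝ≥0} {s : ℕ → ℕ}

theorem Mmod_le_energy {ρ : ℕ → ℝ≥0∞} (hρ : ∀ k, ρ k ≠ ⊤) (hρ₁ : 1 ≤ ∑' k, ρ k) :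
    Mmod p σ s ≤ ∑' k, (σ k : ℝ≥0∞) * s k * ρ k ^ p := by
  have hcoe (k : ℕ) : ((ρ k).toNNReal : ℝ≥0∞) = ρ k := ENNReal.coe_toNNReal (hρ k)
  refine (iInf₂_le (fun k => (ρ k).toNNReal)
    (by simpa only [Set.mem_ofPred_eq, hcoe])).trans_eq ?_
  simp only [hcoe, mul_comm (s _ : ℝ≥0∞)]

theorem Mmod_eq_tsum_rpow (hpq : p.HolderConjugate q) (hs : ∀ k, 1 ≤ s k)
    (hσ : ∀ k, 0 < σ k) :
    Mmod p σ s = (∑' k, ((σ k : ℝ≥0∞) * s k) ^ (-(q / p))) ^ (-(p / q)) := by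
  have hA₀ (k : ℕ) : (σ k : ℝ≥0∞) * s k ≠ 0 :=
    mul_ne_zero (by exact_mod_cast (hσ k).ne')
      (by exact_mod_cast Nat.one_le_iff_ne_zero.1 (hs k))
  have hA (k : ℕ) : (σ k : ℝ≥0∞) * s k ≠ ⊤ :=
    ENNReal.mul_ne_top ENNReal.coe_ne_top (ENNReal.natCast_ne_top _)
  refine le_antisymm ?_ ?_
  · refine ge_of_tendsto ((ENNReal.continuous_rpow_const.tendsto _).comp
      ENNReal.summable.hasSum) ?_
    filter_upwards [eventually_ge_atTop {0}] with F hF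
    obtain ⟨ρ, hρ, hρ₁, hE⟩ :=
      exists_density_energy_eq hpq hA₀ hA ⟨0, hF (Finset.mem_singleton_self 0)⟩
    exact (Mmod_le_energy hρ hρ₁).trans_eq hE
  · refine le_iInf₂ fun ρ hρ => (tsum_rpow_neg_le_energy hpq hA₀ hA hρ).trans_eq ?_
    simp only [mul_comm (σ _ : ℝ≥0∞)]

end Mmod

/-- series formula for the radially symmetric `p`-modulus. -/
theorem stmt4 (p q : ℝ) (hp : 1 < p) (hq : 1 / p + 1 / q = 1)
    (s : ℕ → ℕ) (hs : ∀ k, 1 ≤ s k) (σ : ℕ → ℝ≥0) (hσ : ∀ k, 0 < σ k) :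
    ((∑' k : ℕ, ((σ k : ℝ≥0∞) * (s k : ℝ≥0∞)) ^ (-(q / p))) ≠ ⊤ →
      Mmod p σ s =
        (∑' k : ℕ, ((σ k : ℝ≥0∞) * (s k : ℝ≥0∞)) ^ (-(q / p))) ^ (-(p / q))) ∧
    ((∑' k : ℕ, ((σ k : ℝ≥0∞) * (s k : ℝ≥0∞)) ^ (-(q / p))) = ⊤ →
      Mmod p σ s = 0) := by
  have hpq : p.HolderConjugate q :=
    Real.holderConjugate_iff.mpr ⟨hp, by simpa only [one_div] using hq⟩
  rw [Mmod_eq_tsum_rpow hpq hs hσ]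
  refine ⟨fun _ => rfl, fun hS => ?_⟩
  rw [hS, ENNReal.top_rpow_of_neg (neg_neg_of_pos (div_pos hpq.pos hpq.symm.pos))]
end

section
/- Let T be a radially symmetric proper infinite rooted tree with radially symmetric weight σ, taking the value σ_k on every edge of the shell S_k. If Σ_{k≥1} 1/σ_k < ∞, then Mod_{∞,σ}(Γ_∞) = (Σ_{k≥1} 1/σ_k)^{-1}; if Σ_{k≥1} 1/σ_k = ∞, then Mod_{∞,σ}(Γ_∞) = 0. -/
open scoped ENNReal NNReal

namespace PTree

/-- A tree is radially symmetric if the number of children of an edge depends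
only on its generation. -/
def RadiallySymmetric (T : PTree) : Prop :=
  ∀ ⦃e e' : List ℕ⦄, T.mem e → T.mem e' → e.length = e'.length →
    Nat.card {a : ℕ // T.mem (e ++ [a])} = Nat.card {a : ℕ // T.mem (e' ++ [a])}

end PTree

/-!
Take the radial density `ρ = ε / σ`: every infinite path has `ρ`-length `ε · Σ_{k≥1} 1/σ_k`
and every edge has `σ ρ = ε`, so `Mod_{∞,σ}(Γ_∞) ≤ ε` as soon as `ε · Σ 1/σ_k ≥ 1`.
Conversely, if `ρ` is admissible with `σ ρ ≤ M` everywhere, then along any single infinite path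
`1 ≤ Σ ρ ≤ M · Σ 1/σ_k`. Both bounds give `(Σ_{k≥1} 1/σ_k)⁻¹`, which is `0` when the sum diverges.
-/

lemma seg_length (f : ℕ → ℕ) (n : ℕ) : (seg f n).length = n := by
  simp [seg]

lemma seg_succ (f : ℕ → ℕ) (n : ℕ) : seg f (n + 1) = seg f n ++ [f n] := by
  simp [seg, List.range_succ]

lemma seg_succ_ne_nil (f : ℕ → ℕ) (n : ℕ) : seg f (n + 1) ≠ [] := by
  simp [seg_succ]

namespace PTree

variable (T : PTree)

noncomputable def branch : ℕ → {l : List ℕ // T.mem l}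
  | 0 => ⟨[], T.root_mem⟩
  | n + 1 => ⟨(branch n).1 ++ [(T.child_exists (branch n).2).choose],
      (T.child_exists (branch n).2).choose_spec⟩

lemma seg_branch (n : ℕ) :
    seg (fun k => (T.child_exists (T.branch k).2).choose) n = (T.branch n).1 := by
  induction n with
  | zero => rfl
  | succ n ih => rw [seg_succ, ih]; rfl

lemma gammaInf_nonempty : T.GammaInf.Nonempty :=
  ⟨_, fun n => T.seg_branch n ▸ (T.branch n).2⟩

lemma coe_le_inv_mul_energyTop (σ ρ : List ℕ → ℝ≥0) (e : T.Edge) (hσ : σ e.1 ≠ 0) :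
    (ρ e.1 : ℝ≥0∞) ≤ (σ e.1 : ℝ≥0∞)⁻¹ * T.energyTop σ ρ := by
  calc (ρ e.1 : ℝ≥0∞) = (σ e.1 : ℝ≥0∞)⁻¹ * (σ e.1 * ρ e.1) := by
        rw [← mul_assoc, ENNReal.inv_mul_cancel (by exact_mod_cast hσ) ENNReal.coe_ne_top,
          one_mul]
    _ ≤ (σ e.1 : ℝ≥0∞)⁻¹ * T.energyTop σ ρ := by
        gcongr
        exact le_iSup (fun e : T.Edge => (σ e.1 : ℝ≥0∞) * ρ e.1) e

section Radial

variable {σs : ℕ → ℝ≥0}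

lemma one_le_tsum_inv_mul_energyTop (hσ : ∀ n, 0 < σs n) {ρ : List ℕ → ℝ≥0}
    (hρ : ρ ∈ T.AdmInf) :
    1 ≤ (∑' k : ℕ, (σs (k + 1) : ℝ≥0∞)⁻¹) * T.energyTop (fun l => σs l.length) ρ := by
  obtain ⟨f, hf⟩ := T.gammaInf_nonempty
  calc 1 ≤ lenInf ρ f := hρ f hf
    _ ≤ ∑' k : ℕ, (σs (k + 1) : ℝ≥0∞)⁻¹ * T.energyTop (fun l => σs l.length) ρ := by
      refine ENNReal.tsum_le_tsum fun k => ?_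
      have h := T.coe_le_inv_mul_energyTop (fun l => σs l.length) ρ
        ⟨seg f (k + 1), hf (k + 1), seg_succ_ne_nil f k⟩ (hσ _).ne'
      rwa [seg_length] at h
    _ = _ := ENNReal.tsum_mul_right

lemma ModTop_le_of_one_le_mul (hσ : ∀ n, 0 < σs n) {ε : ℝ≥0∞} (hε : ε ≠ ⊤)
    (h : 1 ≤ ε * ∑' k : ℕ, (σs (k + 1) : ℝ≥0∞)⁻¹) :
    T.ModTop (fun l => σs l.length) ≤ ε := by
  set ρ : List ℕ → ℝ≥0 := fun l => ε.toNNReal * (σs l.length)⁻¹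
  have hρ : ∀ l, (ρ l : ℝ≥0∞) = ε * (σs l.length : ℝ≥0∞)⁻¹ := fun l => by
    simp [ρ, ENNReal.coe_inv (hσ l.length).ne', ENNReal.coe_toNNReal hε]
  have hadm : ρ ∈ T.AdmInf := fun f _ =>
    calc 1 ≤ ε * ∑' k : ℕ, (σs (k + 1) : ℝ≥0∞)⁻¹ := h
      _ = lenInf ρ f := by simp only [lenInf, hρ, seg_length, ENNReal.tsum_mul_left]
  refine (iInf₂_le ρ hadm).trans (iSup_le fun e => ?_)
  rw [hρ, mul_left_comm, ENNReal.mul_inv_cancel (by exact_mod_cast (hσ _).ne')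
    ENNReal.coe_ne_top, mul_one]

theorem ModTop_radial_eq (hσ : ∀ n, 0 < σs n) :
    T.ModTop (fun l => σs l.length) = (∑' k : ℕ, (σs (k + 1) : ℝ≥0∞)⁻¹)⁻¹ := by
  set S := ∑' k : ℕ, (σs (k + 1) : ℝ≥0∞)⁻¹
  have hS : S ≠ 0 :=
    (ENNReal.inv_ne_zero.2 ENNReal.coe_ne_top).bot_lt.trans_le (ENNReal.le_tsum 0) |>.ne'
  refine le_antisymm (le_of_forall_gt_imp_ge_of_dense fun ε hε => ?_) (le_iInf₂ fun ρ hρ => ?_)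
  · rcases eq_or_ne ε ⊤ with rfl | hε_top
    · exact le_top
    refine T.ModTop_le_of_one_le_mul hσ hε_top ?_
    rw [← ENNReal.inv_le_iff_le_mul (fun _ => (pos_of_gt hε).ne') fun h => absurd h hε_top]
    exact (ENNReal.inv_lt_iff_inv_lt.1 hε).le
  · rcases eq_or_ne S ⊤ with hS_top | hS_top
    · simp [hS_top]
    exact (ENNReal.inv_le_iff_le_mul (fun _ => hS) fun h => absurd h hS_top).2
      (T.one_le_tsum_inv_mul_energyTop hσ hρ)

end Radial

end PTree

theorem stmt10_general (T : PTree)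
    (σs : ℕ → ℝ≥0) (hσ : ∀ n, 0 < σs n) :
    ((∑' k : ℕ, (σs (k + 1) : ℝ≥0∞)⁻¹) ≠ ⊤ →
      T.ModTop (fun l => σs l.length) = (∑' k : ℕ, (σs (k + 1) : ℝ≥0∞)⁻¹)⁻¹) ∧
    ((∑' k : ℕ, (σs (k + 1) : ℝ≥0∞)⁻¹) = ⊤ →
      T.ModTop (fun l => σs l.length) = 0) := by
  refine ⟨fun _ => T.ModTop_radial_eq hσ, fun h => ?_⟩
  rw [T.ModTop_radial_eq hσ, h, ENNReal.inv_top]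

/-- for a radially symmetric tree with radially symmetric weight
(value `σs k` on `S_k`): if `Σ_{k≥1} 1/σs k < ∞` then
`Mod_{∞,σ}(Γ_∞) = (Σ_{k≥1} 1/σs k)⁻¹`, and otherwise `Mod_{∞,σ}(Γ_∞) = 0`. -/
theorem stmt10 (T : PTree) (hT : T.RadiallySymmetric)
    (σs : ℕ → ℝ≥0) (hσ : ∀ n, 0 < σs n) :
    ((∑' k : ℕ, (σs (k + 1) : ℝ≥0∞)⁻¹) ≠ ⊤ →
      T.ModTop (fun l => σs l.length) = (∑' k : ℕ, (σs (k + 1) : ℝ≥0∞)⁻¹)⁻¹) ∧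
    ((∑' k : ℕ, (σs (k + 1) : ℝ≥0∞)⁻¹) = ⊤ →
      T.ModTop (fun l => σs l.length) = 0) :=
  stmt10_general T σs hσ
end

section
/- Let 1 < p ≤ p' < ∞, let s : {1,2,...} → ℕ satisfy s_k ≥ 1, and let σ : {1,2,...} → ℝ satisfy σ_k > 0. If M_p(σ,s) > 0, then M_{p'}(σ,s) ≤ M_p(σ,s). -/
open scoped ENNReal NNReal

/-- monotonicity of the radially symmetric `p`-modulus in `p`. -/
theorem stmt12 (p p' : ℝ) (hp : 1 < p) (hpp : p ≤ p')
    (s : ℕ → ℕ) (hs : ∀ k, 1 ≤ s k) (σ : ℕ → ℝ≥0) (hσ : ∀ k, 0 < σ k)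
    (hM : 0 < Mmod p σ s) :
    Mmod p' σ s ≤ Mmod p σ s := by
  refine le_iInf₂ fun ρ hρ => ?_
  set ρ' : ℕ → ℝ≥0 := fun k => min (ρ k) 1 with hρ'def
  have hle1 : ∀ k, (ρ' k : ℝ≥0∞) ≤ 1 := by
    intro k
    exact_mod_cast min_le_right (ρ k) 1
  have hleρ : ∀ k, (ρ' k : ℝ≥0∞) ≤ (ρ k : ℝ≥0∞) := by
    intro k
    exact_mod_cast min_le_left (ρ k) 1
  have hadm : ρ' ∈ {ρ : ℕ → ℝ≥0 | 1 ≤ ∑' k : ℕ, (ρ k : ℝ≥0∞)} := by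
    by_cases h : ∃ k, 1 ≤ ρ k
    · obtain ⟨k, hk⟩ := h
      have : (ρ' k : ℝ≥0∞) = 1 := by
        simp [hρ'def, min_eq_right hk]
      calc (1 : ℝ≥0∞) = (ρ' k : ℝ≥0∞) := this.symm
        _ ≤ ∑' j, (ρ' j : ℝ≥0∞) := ENNReal.le_tsum k
    · push_neg at h
      have : ∀ k, ρ' k = ρ k := fun k => min_eq_left (h k).le
      simpa [this] using hρ
  calc Mmod p' σ s
      ≤ ∑' k : ℕ, (s k : ℝ≥0∞) * (σ k : ℝ≥0∞) * (ρ' k : ℝ≥0∞) ^ p' :=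
        iInf₂_le ρ' hadm
    _ ≤ ∑' k : ℕ, (s k : ℝ≥0∞) * (σ k : ℝ≥0∞) * (ρ' k : ℝ≥0∞) ^ p := by
        refine ENNReal.tsum_le_tsum fun k => ?_
        exact mul_le_mul_right (ENNReal.rpow_le_rpow_of_exponent_ge (hle1 k) hpp) _
    _ ≤ ∑' k : ℕ, (s k : ℝ≥0∞) * (σ k : ℝ≥0∞) * (ρ k : ℝ≥0∞) ^ p := by
        refine ENNReal.tsum_le_tsum fun k => ?_
        exact mul_le_mul_right (ENNReal.rpow_le_rpow (hleρ k) (by linarith)) _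
end
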